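/- arXiv:2112.04161 — 4 statements merged into one kernel-verified Lean document; each statement's English description precedes it below -/
import Mathlib

section
/- Finite-dimensional complete class theorem: Let Θ be a finite set and let the risk set S ⊆ ℝ^Θ be nonempty, convex, and closed. If r ∈ S is the risk profile of an admissible rule (i.e., no s ∈ S satisfies s ≤ r coordinatewise with strict inequality in some coordinate), then there exists a probability vector π ∈ Δ(Θ) such that Σ_θ π(θ)·r(θ) ≤ Σ_θ π(θ)·s(θ) for all s ∈ S. -/
/-! The points lying strictly below `r` in every coordinate form an open convex set, disjoint
from `S` because `r` is admissible. Separating it from `S` by a linear functional `f` gives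
`f < u` on this orthant and `u ≤ f` on `S`; by continuity `f ≤ u ≤ f r` on the closed orthant,
so `r` maximises `f` on `{x | x ≤ r}`. Hence `f` is monotone, i.e. it is integration against
nonnegative weights, with positive total mass `f 1`; normalising them gives the prior. -/

open Set

section

variable {Θ : Type*}

theorem LinearMap.monotone_of_forall_le_imp_apply_le (f : (Θ → ℝ) →ₗ[ℝ] ℝ) (r : Θ → ℝ)
    (h : ∀ x ≤ r, f x ≤ f r) : Monotone f := by
  intro x y hxy
  have := h (r - (y - x)) (sub_le_self r (sub_nonneg.mpr hxy))
  simp only [map_sub] at this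
  linarith

theorem LinearMap.exists_prob_apply_div_eq_sum [Fintype Θ] (f : (Θ → ℝ) →ₗ[ℝ] ℝ)
    (hf : Monotone f) (h1 : 0 < f 1) :
    ∃ π : Θ → ℝ, (∀ θ, 0 ≤ π θ) ∧ (∑ θ, π θ = 1) ∧
      ∀ x, ∑ θ, π θ * x θ = f x / f 1 := by
  classical
  set e : Θ → Θ → ℝ := fun θ j => if θ = j then 1 else 0
  have hsum : ∀ x, ∑ θ, f (e θ) / f 1 * x θ = f x / f 1 := fun x => by
    rw [f.pi_apply_eq_sum_univ x, Finset.sum_div]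
    exact Finset.sum_congr rfl fun θ _ => by rw [smul_eq_mul]; ring
  refine ⟨fun θ => f (e θ) / f 1, fun θ => div_nonneg ?_ h1.le, ?_, hsum⟩
  · simpa using hf (show 0 ≤ e θ from fun j => by dsimp only [e]; split_ifs <;> norm_num)
  · simpa [div_self h1.ne'] using hsum 1

theorem disjoint_pi_Iio_of_admissible [Nonempty Θ] {S : Set (Θ → ℝ)} {r : Θ → ℝ}
    (hadm : ¬ ∃ s ∈ S, (∀ θ, s θ ≤ r θ) ∧ ∃ θ₀, s θ₀ < r θ₀) :
    Disjoint (univ.pi fun θ => Iio (r θ)) S :=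
  Set.disjoint_left.mpr fun x hx hxS =>
    hadm ⟨x, hxS, fun θ => (hx θ trivial).le, Classical.arbitrary Θ, hx _ trivial⟩

theorem le_of_forall_pi_Iio_lt {f : (Θ → ℝ) → ℝ} (hf : Continuous f) {r : Θ → ℝ} {u : ℝ}
    (h : ∀ x ∈ univ.pi fun θ => Iio (r θ), f x < u) {x : Θ → ℝ} (hx : x ≤ r) :
    f x ≤ u := by
  have hcl : x ∈ closure (univ.pi fun θ => Iio (r θ)) := by
    rw [closure_pi_set]
    simpa [closure_Iio] using hx
  exact closure_minimal (fun y hy => (h y hy).le) (isClosed_le hf continuous_const) hcl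

end

theorem finite_complete_class_general {Θ : Type*} [Fintype Θ] [Nonempty Θ]
    (S : Set (Θ → ℝ)) (hconv : Convex ℝ S)
    (r : Θ → ℝ) (hr : r ∈ S)
    (hadm : ¬ ∃ s ∈ S, (∀ θ, s θ ≤ r θ) ∧ ∃ θ₀, s θ₀ < r θ₀) :
    ∃ π : Θ → ℝ, (∀ θ, 0 ≤ π θ) ∧ (∑ θ, π θ = 1) ∧
      ∀ s ∈ S, ∑ θ, π θ * r θ ≤ ∑ θ, π θ * s θ := by
  obtain ⟨f, u, hlt, hge⟩ := geometric_hahn_banach_open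
    (convex_pi fun θ _ => convex_Iio (r θ))
    (isOpen_set_pi finite_univ fun θ _ => isOpen_Iio) hconv (disjoint_pi_Iio_of_admissible hadm)
  have hfr : f r ≤ u := le_of_forall_pi_Iio_lt f.continuous hlt le_rfl
  have hle : ∀ x ≤ r, f x ≤ f r := fun x hx =>
    (le_of_forall_pi_Iio_lt f.continuous hlt hx).trans (hge r hr)
  have h1 : 0 < f 1 := by
    have := (hlt (r - 1) fun θ _ => by simp).trans_le (hge r hr)
    rwa [map_sub, sub_lt_self_iff] at this
  obtain ⟨π, hπ, hπ1, hbayes⟩ := f.toLinearMap.exists_prob_apply_div_eq_sum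
    (f.toLinearMap.monotone_of_forall_le_imp_apply_le r hle) h1
  refine ⟨π, hπ, hπ1, fun s hs => ?_⟩
  rw [hbayes, hbayes]
  exact div_le_div_of_nonneg_right (hfr.trans (hge s hs)) h1.le

/-- Finite-dimensional complete class theorem: if `r` is an admissible point of a
nonempty closed convex risk set `S ⊆ ℝ^Θ`, then there is a prior `π ∈ Δ(Θ)` for
which `r` minimizes the Bayes risk over `S`. -/
theorem finite_complete_class {Θ : Type*} [Fintype Θ] [Nonempty Θ]
    (S : Set (Θ → ℝ)) (hne : S.Nonempty) (hconv : Convex ℝ S) (hclosed : IsClosed S)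
    (r : Θ → ℝ) (hr : r ∈ S)
    (hadm : ¬ ∃ s ∈ S, (∀ θ, s θ ≤ r θ) ∧ ∃ θ₀, s θ₀ < r θ₀) :
    ∃ π : Θ → ℝ, (∀ θ, 0 ≤ π θ) ∧ (∑ θ, π θ = 1) ∧
      ∀ s ∈ S, ∑ θ, π θ * r θ ≤ ∑ θ, π θ * s θ :=
  finite_complete_class_general S hconv r hr hadm
end

section
/- Duality for consistency (one direction, finite dimensions): let π₁, π₂, π ∈ Δ(Θ) with Θ finite, and suppose for all s₁, s₂ ∈ ℝ^Θ, (⟨π₁, s₁ - s₂⟩ ≥ 0 and ⟨π₂, s₁ - s₂⟩ ≥ 0) implies ⟨π, s₁ - s₂⟩ ≥ 0. Then π = λ·π₁ + (1-λ)·π₂ for some λ ∈ [0,1]. -/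
/-!
Write `f₁, f₂, f` for the functionals `v ↦ ⟨π₁, v⟩, v ↦ ⟨π₂, v⟩, v ↦ ⟨π, v⟩`; all three take the
value `1` on the constant vector `1`. Applying the hypothesis to `v - c • 1` and `c • 1 - v` shows
that `f v` always lies between `f₁ v` and `f₂ v`. In particular `f = f₂` on the kernel of
`f₁ - f₂`, so `f - f₂ = λ • (f₁ - f₂)`, and evaluating at a vector where `f₁ - f₂` is `1` gives
`λ ∈ [0, 1]`.
-/

open Set

namespace LinearMap

theorem exists_eq_smul_of_ker_le_ker {𝕜 E : Type*} [Field 𝕜] [AddCommGroup E] [Module 𝕜 E]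
    {g h : E →ₗ[𝕜] 𝕜} (hker : ker g ≤ ker h) : ∃ μ : 𝕜, h = μ • g := by
  have hspan := mem_span_of_iInf_ker_le_ker (L := fun _ : Unit ↦ g) (by simpa using hker)
  rw [range_const, Submodule.mem_span_singleton] at hspan
  obtain ⟨μ, hμ⟩ := hspan
  exact ⟨μ, hμ.symm⟩

theorem apply_mem_uIcc_of_nonneg_of_nonneg {𝕜 E : Type*} [CommRing 𝕜] [LinearOrder 𝕜]
    [IsOrderedRing 𝕜] [AddCommGroup E] [Module 𝕜 E] {f₁ f₂ f : E →ₗ[𝕜] 𝕜} {e : E}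
    (he₁ : f₁ e = 1) (he₂ : f₂ e = 1) (he : f e = 1)
    (hcone : ∀ v, 0 ≤ f₁ v → 0 ≤ f₂ v → 0 ≤ f v) (v : E) :
    f v ∈ uIcc (f₁ v) (f₂ v) := by
  have hlower := hcone (v - (f₁ v ⊓ f₂ v) • e)
  have hupper := hcone ((f₁ v ⊔ f₂ v) • e - v)
  simp only [map_sub, map_smul, he₁, he₂, he, smul_eq_mul, mul_one, sub_nonneg] at hlower hupper
  exact ⟨hlower inf_le_left inf_le_right, hupper le_sup_left le_sup_right⟩

theorem mem_segment_of_forall_apply_mem_uIcc {𝕜 E : Type*} [Field 𝕜] [LinearOrder 𝕜]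
    [IsStrictOrderedRing 𝕜] [AddCommGroup E] [Module 𝕜 E] {f₁ f₂ f : E →ₗ[𝕜] 𝕜}
    (hf : ∀ v, f v ∈ uIcc (f₁ v) (f₂ v)) : f ∈ segment 𝕜 f₁ f₂ := by
  by_cases h₁₂ : f₁ = f₂
  · subst h₁₂
    have : f = f₁ := LinearMap.ext fun v ↦ by simpa using hf v
    exact this ▸ left_mem_segment 𝕜 f₁ f₁
  have hker : ker (f₁ - f₂) ≤ ker (f - f₂) := fun v hv ↦ by
    have hv' : f₁ v = f₂ v := sub_eq_zero.mp hv
    have := hf v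
    rw [hv', uIcc_self, mem_singleton_iff] at this
    simp [this]
  obtain ⟨μ, hμ⟩ := exists_eq_smul_of_ker_le_ker hker
  obtain ⟨u, hu⟩ : ∃ u, (f₁ - f₂) u = 1 := by
    obtain ⟨w, hw⟩ : ∃ w, (f₁ - f₂) w ≠ 0 := by
      by_contra! h
      exact h₁₂ (sub_eq_zero.mp (LinearMap.ext h))
    exact ⟨((f₁ - f₂) w)⁻¹ • w, by rw [map_smul, smul_eq_mul, inv_mul_cancel₀ hw]⟩
  have hfu : f u = f₂ u + μ := by
    simpa [hu, sub_eq_iff_eq_add'] using LinearMap.congr_fun hμ u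
  have hf₁u : f₁ u = f₂ u + 1 := by simpa [sub_eq_iff_eq_add'] using hu
  have hμ01 : μ ∈ Icc (0 : 𝕜) 1 := by
    have := hf u
    rw [hfu, hf₁u, uIcc_of_ge (le_add_of_nonneg_right zero_le_one)] at this
    exact ⟨by linarith [this.1], by linarith [this.2]⟩
  refine ⟨μ, 1 - μ, hμ01.1, sub_nonneg.mpr hμ01.2, add_sub_cancel _ _, ?_⟩
  rw [sub_eq_iff_eq_add.mp hμ]
  module

end LinearMap

theorem consistency_duality_general {Θ : Type*} [Fintype Θ]
    (π₁ π₂ π : Θ → ℝ)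
    (hπ₁ : (∀ θ, 0 ≤ π₁ θ) ∧ ∑ θ, π₁ θ = 1)
    (hπ₂ : (∀ θ, 0 ≤ π₂ θ) ∧ ∑ θ, π₂ θ = 1)
    (hπ : (∀ θ, 0 ≤ π θ) ∧ ∑ θ, π θ = 1)
    (hcons : ∀ v : Θ → ℝ,
      0 ≤ ∑ θ, π₁ θ * v θ → 0 ≤ ∑ θ, π₂ θ * v θ → 0 ≤ ∑ θ, π θ * v θ) :
    ∃ lam : ℝ, 0 ≤ lam ∧ lam ≤ 1 ∧ ∀ θ, π θ = lam * π₁ θ + (1 - lam) * π₂ θ := by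
  classical
  let F := dotProductEquiv ℝ Θ
  have hF_one {w : Θ → ℝ} (hw : ∑ θ, w θ = 1) : F w 1 = 1 := by simpa [F, dotProduct] using hw
  have hseg : F π ∈ segment ℝ (F π₁) (F π₂) :=
    LinearMap.mem_segment_of_forall_apply_mem_uIcc <|
      LinearMap.apply_mem_uIcc_of_nonneg_of_nonneg (hF_one hπ₁.2) (hF_one hπ₂.2) (hF_one hπ.2)
        fun v ↦ by simpa [F, dotProduct] using hcons v
  obtain ⟨a, b, ha, hb, hab, hcomb⟩ := hseg
  obtain rfl : b = 1 - a := eq_sub_of_add_eq' hab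
  have hπ_eq : a • π₁ + (1 - a) • π₂ = π := F.injective (by simpa using hcomb)
  refine ⟨a, ha, by linarith, fun θ ↦ ?_⟩
  simpa using (congr_fun hπ_eq θ).symm

/-- Duality for consistency (finite dimensions): if every vector `v` weakly
approved by both `π₁` and `π₂` is weakly approved by `π`, then `π` is a convex
combination of `π₁` and `π₂`. -/
theorem consistency_duality {Θ : Type*} [Fintype Θ] [Nonempty Θ]
    (π₁ π₂ π : Θ → ℝ)
    (hπ₁ : (∀ θ, 0 ≤ π₁ θ) ∧ ∑ θ, π₁ θ = 1)
    (hπ₂ : (∀ θ, 0 ≤ π₂ θ) ∧ ∑ θ, π₂ θ = 1)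
    (hπ : (∀ θ, 0 ≤ π θ) ∧ ∑ θ, π θ = 1)
    (hcons : ∀ v : Θ → ℝ,
      0 ≤ ∑ θ, π₁ θ * v θ → 0 ≤ ∑ θ, π₂ θ * v θ → 0 ≤ ∑ θ, π θ * v θ) :
    ∃ lam : ℝ, 0 ≤ lam ∧ lam ≤ 1 ∧ ∀ θ, π θ = lam * π₁ θ + (1 - lam) * π₂ θ :=
  consistency_duality_general π₁ π₂ π hπ₁ hπ₂ hπ hcons
end

section
/- Strict duality for consistency: let π₁, π₂, π ∈ Δ(Θ) with Θ finite, π₁ ≠ π₂, and suppose for all v ∈ ℝ^Θ, (⟨π₁, v⟩ > 0 and ⟨π₂, v⟩ ≥ 0) implies ⟨π, v⟩ > 0, and also (⟨π₁, v⟩ ≥ 0 and ⟨π₂, v⟩ ≥ 0) implies ⟨π, v⟩ ≥ 0. Then π = λ·π₁ + (1-λ)·π₂ for some λ ∈ (0,1]. -/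
/-!
The weak condition, applied to `v` and `-v`, shows that `⟨π, ·⟩` vanishes on the common kernel
of `⟨π₁, ·⟩` and `⟨π₂, ·⟩`, so `π = a π₁ + b π₂`. Two distinct points of the simplex are linearly
independent, hence there are test vectors `v` with `⟨π₂, v⟩ = 0 < ⟨π₁, v⟩` and `w` with
`⟨π₁, w⟩ = 0 < ⟨π₂, w⟩`: the strict condition at `v` gives `a > 0`, the weak one at `w` gives
`b ≥ 0`, and testing against the constant vector `1` gives `a + b = 1`.
-/

open Module Submodule

theorem LinearIndependent.notMem_span_singleton_of_pair {R M : Type*} [Ring R] [Nontrivial R]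
    [AddCommGroup M] [Module R M] {x y : M} (h : LinearIndependent R ![x, y]) : x ∉ R ∙ y := by
  intro hx
  obtain ⟨c, rfl⟩ := mem_span_singleton.mp hx
  exact one_ne_zero (LinearIndependent.pair_iff.mp h 1 (-c) (by simp)).1

theorem linearIndependent_pair_of_sum_eq_one {𝕜 ι : Type*} [Field 𝕜] [Fintype ι] {x y : ι → 𝕜}
    (hx : ∑ i, x i = 1) (hy : ∑ i, y i = 1) (hne : x ≠ y) : LinearIndependent 𝕜 ![x, y] := by
  refine LinearIndependent.pair_iff.mpr fun s t hst => ?_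
  have hsum : s + t = 0 := by
    simpa [Finset.sum_add_distrib, ← Finset.mul_sum, hx, hy] using congr_arg (∑ i, · i) hst
  rw [eq_neg_of_add_eq_zero_right hsum, neg_smul, ← sub_eq_add_neg, ← smul_sub,
    smul_eq_zero] at hst
  have hs : s = 0 := hst.resolve_right (sub_ne_zero.mpr hne)
  exact ⟨hs, by simpa [hs] using hsum⟩

namespace Module.Dual

variable {𝕜 E : Type*} [Field 𝕜] [LinearOrder 𝕜] [IsStrictOrderedRing 𝕜]
  [AddCommGroup E] [Module 𝕜 E]

theorem mem_span_pair_of_nonneg {f₁ f₂ f : Dual 𝕜 E}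
    (h : ∀ v, 0 ≤ f₁ v → 0 ≤ f₂ v → 0 ≤ f v) : f ∈ span 𝕜 {f₁, f₂} := by
  have hker : ⨅ i, LinearMap.ker (![f₁, f₂] i) ≤ LinearMap.ker f := by
    intro v hv
    simp only [Submodule.mem_iInf, LinearMap.mem_ker, Fin.forall_fin_two, Matrix.cons_val_zero,
      Matrix.cons_val_one] at hv
    obtain ⟨h₁, h₂⟩ := hv
    have hneg := h (-v) (by simp [h₁]) (by simp [h₂])
    exact le_antisymm (by simpa using hneg) (h v h₁.ge h₂.ge)
  simpa [Matrix.range_cons, Set.pair_comm] using mem_span_of_iInf_ker_le_ker hker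

theorem exists_pos_of_notMem_span_singleton {f₁ f₂ : Dual 𝕜 E}
    (h : f₁ ∉ 𝕜 ∙ f₂) : ∃ v, f₂ v = 0 ∧ 0 < f₁ v := by
  by_contra! hle
  have hker : ⨅ _ : Unit, LinearMap.ker f₂ ≤ LinearMap.ker f₁ := by
    intro v hv
    simp only [iInf_const, LinearMap.mem_ker] at hv
    have hneg := hle (-v) (by simp [hv])
    exact le_antisymm (hle v hv) (by simpa using hneg)
  exact h (by simpa using mem_span_of_iInf_ker_le_ker hker)

theorem exists_eq_pos_smul_add_nonneg_smul {f₁ f₂ f : Dual 𝕜 E}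
    (hind : LinearIndependent 𝕜 ![f₁, f₂])
    (hstrict : ∀ v, 0 < f₁ v → 0 ≤ f₂ v → 0 < f v)
    (hweak : ∀ v, 0 ≤ f₁ v → 0 ≤ f₂ v → 0 ≤ f v) :
    ∃ a b : 𝕜, 0 < a ∧ 0 ≤ b ∧ f = a • f₁ + b • f₂ := by
  obtain ⟨a, b, rfl⟩ := mem_span_pair.mp (mem_span_pair_of_nonneg hweak)
  obtain ⟨v, hv₂, hv₁⟩ := exists_pos_of_notMem_span_singleton hind.notMem_span_singleton_of_pair
  obtain ⟨w, hw₁, hw₂⟩ := exists_pos_of_notMem_span_singleton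
    (LinearIndependent.pair_symm_iff.mp hind).notMem_span_singleton_of_pair
  have ha : 0 < a * f₁ v := by simpa [hv₂] using hstrict v hv₁ hv₂.ge
  have hb : 0 ≤ b * f₂ w := by simpa [hw₁] using hweak w hw₁.ge hw₂.le
  exact ⟨a, b, pos_of_mul_pos_left ha hv₁.le, nonneg_of_mul_nonneg_left hb hw₂, rfl⟩

end Module.Dual

theorem strict_consistency_duality_general {Θ : Type*} [Fintype Θ]
    (π₁ π₂ π : Θ → ℝ)
    (hπ₁ : (∀ θ, 0 ≤ π₁ θ) ∧ ∑ θ, π₁ θ = 1)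
    (hπ₂ : (∀ θ, 0 ≤ π₂ θ) ∧ ∑ θ, π₂ θ = 1)
    (hπ : (∀ θ, 0 ≤ π θ) ∧ ∑ θ, π θ = 1)
    (hne : π₁ ≠ π₂)
    (hstrict : ∀ v : Θ → ℝ,
      0 < ∑ θ, π₁ θ * v θ → 0 ≤ ∑ θ, π₂ θ * v θ → 0 < ∑ θ, π θ * v θ)
    (hweak : ∀ v : Θ → ℝ,
      0 ≤ ∑ θ, π₁ θ * v θ → 0 ≤ ∑ θ, π₂ θ * v θ → 0 ≤ ∑ θ, π θ * v θ) :
    ∃ lam : ℝ, 0 < lam ∧ lam ≤ 1 ∧ ∀ θ, π θ = lam * π₁ θ + (1 - lam) * π₂ θ := by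
  classical
  let F := dotProductEquiv ℝ Θ
  have hF : ∀ p v, F p v = ∑ θ, p θ * v θ := fun _ _ => rfl
  have hind : LinearIndependent ℝ ![F π₁, F π₂] := by
    refine LinearIndependent.pair_iff.mpr fun s t hst => ?_
    refine (LinearIndependent.pair_iff (R := ℝ)).mp
      (linearIndependent_pair_of_sum_eq_one hπ₁.2 hπ₂.2 hne) s t ?_
    exact F.injective (by rw [map_add, map_smul, map_smul, map_zero]; exact hst)
  obtain ⟨a, b, ha, hb, hπF⟩ := Dual.exists_eq_pos_smul_add_nonneg_smul (f := F π) hind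
    (by simpa only [hF] using hstrict) (by simpa only [hF] using hweak)
  have hπ_eq : π = a • π₁ + b • π₂ := F.injective (by simpa using hπF)
  have hab : a + b = 1 := by
    simpa [hF, hπ.2, hπ₁.2, hπ₂.2, eq_comm] using LinearMap.congr_fun hπF 1
  refine ⟨a, ha, by linarith, fun θ => ?_⟩
  rw [hπ_eq, ← hab]
  simp

/-- Strict duality for consistency: under the strict and weak approval-preservation
conditions, `π` is a convex combination `λ·π₁ + (1-λ)·π₂` with `λ ∈ (0,1]`. -/
theorem strict_consistency_duality {Θ : Type*} [Fintype Θ] [Nonempty Θ]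
    (π₁ π₂ π : Θ → ℝ)
    (hπ₁ : (∀ θ, 0 ≤ π₁ θ) ∧ ∑ θ, π₁ θ = 1)
    (hπ₂ : (∀ θ, 0 ≤ π₂ θ) ∧ ∑ θ, π₂ θ = 1)
    (hπ : (∀ θ, 0 ≤ π θ) ∧ ∑ θ, π θ = 1)
    (hne : π₁ ≠ π₂)
    (hstrict : ∀ v : Θ → ℝ,
      0 < ∑ θ, π₁ θ * v θ → 0 ≤ ∑ θ, π₂ θ * v θ → 0 < ∑ θ, π θ * v θ)
    (hweak : ∀ v : Θ → ℝ,
      0 ≤ ∑ θ, π₁ θ * v θ → 0 ≤ ∑ θ, π₂ θ * v θ → 0 ≤ ∑ θ, π θ * v θ) :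
    ∃ lam : ℝ, 0 < lam ∧ lam ≤ 1 ∧ ∀ θ, π θ = lam * π₁ θ + (1 - lam) * π₂ θ :=
  strict_consistency_duality_general π₁ π₂ π hπ₁ hπ₂ hπ hne hstrict hweak
end

section
/- Uniqueness of the weight function up to positive scaling: suppose g(A) = (Σ_{e∈A} w(e)·π_e)/(Σ_{e∈A} w(e)) = (Σ_{e∈A} w'(e)·π_e)/(Σ_{e∈A} w'(e)) for all finite nonempty A ⊆ E, where the priors π_e ∈ Δ(Θ) are affinely independent and |E| ≥ 3 (the range is not contained in a one-dimensional affine variety). Then there exists c > 0 with w'(e) = c·w(e) for all e ∈ E. -/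
/-!
Only two-element sets are needed. Affine independence makes the priors pairwise distinct, so
for `e ≠ e₀` some coordinate `θ` has `π e θ ≠ π e₀ θ`; equality of the two averages of
`{e, e₀}` at that coordinate forces `w e : w e₀ = w' e : w' e₀`, and the ratio `w' / w` is
therefore constant.
-/

open Finset

theorem mul_eq_mul_of_div_add_eq_div_add {x y a b a' b' : ℝ} (hxy : x ≠ y)
    (hab : a + b ≠ 0) (hab' : a' + b' ≠ 0)
    (h : (a * x + b * y) / (a + b) = (a' * x + b' * y) / (a' + b')) :
    a * b' = a' * b := by
  rw [div_eq_div_iff hab hab'] at h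
  have hfac : (a * b' - a' * b) * (x - y) = 0 := by linear_combination h
  rcases mul_eq_zero.mp hfac with h0 | h0
  · exact sub_eq_zero.mp h0
  · exact absurd (sub_eq_zero.mp h0) hxy

theorem exists_pos_eq_mul_of_mul_eq_mul {E : Type*} [Nonempty E] {w w' : E → ℝ}
    (hw : ∀ e, 0 < w e) (hw' : ∀ e, 0 < w' e) (h : ∀ e e₀, w e * w' e₀ = w' e * w e₀) :
    ∃ c : ℝ, 0 < c ∧ ∀ e, w' e = c * w e := by
  obtain ⟨e₀⟩ := ‹Nonempty E›
  refine ⟨w' e₀ / w e₀, div_pos (hw' e₀) (hw e₀), fun e => ?_⟩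
  rw [div_mul_eq_mul_div, eq_div_iff (hw e₀).ne']
  linear_combination -h e e₀

theorem mul_eq_mul_of_pair_average_eq {E Θ : Type*} {π : E → Θ → ℝ}
    (hπ : Function.Injective π) {w w' : E → ℝ} (hw : ∀ e, 0 < w e) (hw' : ∀ e, 0 < w' e)
    (hsame : ∀ A : Finset E, A.Nonempty → ∀ θ,
      (∑ e ∈ A, w e * π e θ) / (∑ e ∈ A, w e)
        = (∑ e ∈ A, w' e * π e θ) / (∑ e ∈ A, w' e))
    (e e₀ : E) : w e * w' e₀ = w' e * w e₀ := by
  classical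
  rcases eq_or_ne e e₀ with rfl | hne
  · exact mul_comm _ _
  obtain ⟨θ, hθ⟩ := Function.ne_iff.mp (hπ.ne hne)
  have h := hsame {e, e₀} (insert_nonempty _ _) θ
  simp only [sum_pair hne] at h
  exact mul_eq_mul_of_div_add_eq_div_add hθ (add_pos (hw e) (hw e₀)).ne'
    (add_pos (hw' e) (hw' e₀)).ne' h

open Finset in
theorem weight_unique_up_to_scaling_general {E Θ : Type*} [Fintype E]
    (hcard : 3 ≤ Fintype.card E)
    (π : E → Θ → ℝ)
    (hindep : AffineIndependent ℝ π)
    (w w' : E → ℝ) (hw : ∀ e, 0 < w e) (hw' : ∀ e, 0 < w' e)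
    (hsame : ∀ A : Finset E, A.Nonempty → ∀ θ,
      (∑ e ∈ A, w e * π e θ) / (∑ e ∈ A, w e)
        = (∑ e ∈ A, w' e * π e θ) / (∑ e ∈ A, w' e)) :
    ∃ c : ℝ, 0 < c ∧ ∀ e, w' e = c * w e := by
  have : Nonempty E := Fintype.card_pos_iff.mp (by omega)
  exact exists_pos_eq_mul_of_mul_eq_mul hw hw'
    (mul_eq_mul_of_pair_average_eq hindep.injective hw hw' hsame)

open Finset in
/-- Uniqueness of the weight function up to positive scaling: if two positive weight
functions `w` and `w'` induce the same weighted-average aggregation of affinely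
independent priors `π_e` (with `|E| ≥ 3`), then `w' = c·w` for some `c > 0`. -/
theorem weight_unique_up_to_scaling {E Θ : Type*} [Fintype E] [DecidableEq E] [Fintype Θ]
    (hcard : 3 ≤ Fintype.card E)
    (π : E → Θ → ℝ) (hπ : ∀ e, (∀ θ, 0 ≤ π e θ) ∧ ∑ θ, π e θ = 1)
    (hindep : AffineIndependent ℝ π)
    (w w' : E → ℝ) (hw : ∀ e, 0 < w e) (hw' : ∀ e, 0 < w' e)
    (hsame : ∀ A : Finset E, A.Nonempty → ∀ θ,
      (∑ e ∈ A, w e * π e θ) / (∑ e ∈ A, w e)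
        = (∑ e ∈ A, w' e * π e θ) / (∑ e ∈ A, w' e)) :
    ∃ c : ℝ, 0 < c ∧ ∀ e, w' e = c * w e :=
  weight_unique_up_to_scaling_general hcard π hindep w w' hw hw' hsame
end
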